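/- Let d ≥ 3 and 1 ≤ k ≤ d−2 be integers, let p be an IDF prime for (d,k), and let r be the unique integer with 0 ≤ r ≤ k and p ∣ d−r. Let α, β, x be rational numbers with α ≠ 0, β ≠ 0, x ≠ 0 and v_p(x) < 0. Then: (a) if f_{α,β}(x) ≠ 0, then v_p(f_{α,β}(x)) ≥ min{v_p(α) + v_p(d−r) + d·v_p(x), v_p(α) + (d−r)·v_p(x), v_p(β)}; (b) the two quantities v_p(α) + v_p(d−r) + d·v_p(x) and v_p(α) + (d−r)·v_p(x) are never equal; (c) if the minimum in (a) is attained by exactly one of the three quantities, then f_{α,β}(x) ≠ 0 and v_p(f_{α,β}(x)) equals that minimum. -/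

import Mathlib

open Finset Function

/-- The coefficient `b_i` of `z^(d-i)` in the normalized dynamical Belyi polynomial
`B_{d,k}`. -/
def belyiCoeff (d k i : ℕ) : ℚ :=
  ((-1 : ℚ) ^ (k - i) / ((k - i).factorial * i.factorial)) *
    ∏ j ∈ (Finset.range (k + 1)).erase i, ((d : ℚ) - (j : ℚ))

/-- The normalized dynamical Belyi polynomial `B_{d,k}` as a function on `ℚ`. -/
def belyi (d k : ℕ) (z : ℚ) : ℚ :=
  ∑ i ∈ Finset.range (k + 1), belyiCoeff d k i * z ^ (d - i)

/-- The map `f_{a,c}(z) = a · B_{d,k}(z) + c`. -/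
def belyiMap (d k : ℕ) (a c z : ℚ) : ℚ := a * belyi d k z + c

/-- `p` is an index divisor free (IDF) prime for the pair `(d,k)`:
`p` is a prime with `p > k`, `p ∣ d - r` for some `r ≤ k`, and `r ∤ v_p(d-r)`. -/
def IsIDFPrime (d k p : ℕ) : Prop :=
  p.Prime ∧ k < p ∧ ∃ r ≤ k, p ∣ (d - r) ∧ ¬ (r ∣ padicValNat p (d - r))

/-- A rational number is `p`-integral if it is zero or has nonnegative `p`-adic valuation. -/
def PIntegral (p : ℕ) (x : ℚ) : Prop := x = 0 ∨ 0 ≤ padicValRat p x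

/-
The `i`-th term `b_i x^(d-i)` of `B_{d,k}(x)` has valuation `(d-i)·v_p(x)`, plus `v_p(d-r)` unless
`i = r`, because among the factors `d - j` (`j ≤ k < p`) of `b_i` only `d - r` is divisible by `p`.
As `v_p(x) < 0`, every term other than `i = 0` and `i = r` has strictly larger valuation than the
term `i = 0`, and the terms `i = 0` and `i = r` have different valuations exactly because
`v_p(d-r) + r·v_p(x) ≠ 0`, which is the IDF condition `r ∤ v_p(d-r)`. So `B_{d,k}(x)` has a unique
term of minimal valuation, and `f_{α,β}(x) = α·B_{d,k}(x) + β` is controlled by the ultrametric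
inequality.
-/

namespace padicValRat

variable {p : ℕ} {ι : Type*}

theorem add_ne_zero_of_ne {q r : ℚ} (h : padicValRat p q ≠ padicValRat p r) : q + r ≠ 0 := by
  intro hqr
  rw [eq_neg_of_add_eq_zero_right hqr, padicValRat.neg] at h
  exact h rfl

variable [Fact p.Prime]

theorem prod {s : Finset ι} {f : ι → ℚ} (hf : ∀ i ∈ s, f i ≠ 0) :
    padicValRat p (∏ i ∈ s, f i) = ∑ i ∈ s, padicValRat p (f i) := by
  induction s using Finset.cons_induction with
  | empty => simp
  | cons a s ha ih =>
    rw [prod_cons, sum_cons, padicValRat.mul (hf a (mem_cons_self a s))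
      (prod_ne_zero_iff.2 fun i hi => hf i (mem_cons_of_mem hi)),
      ih fun i hi => hf i (mem_cons_of_mem hi)]

theorem lt_sum_of_forall_lt {c : ℤ} {s : Finset ι} {f : ι → ℚ} (hs : ∑ i ∈ s, f i ≠ 0)
    (h : ∀ i ∈ s, c < padicValRat p (f i)) : c < padicValRat p (∑ i ∈ s, f i) := by
  induction s using Finset.cons_induction with
  | empty => simp at hs
  | cons a s ha ih =>
    rw [sum_cons] at hs ⊢
    by_cases hs0 : ∑ i ∈ s, f i = 0
    · simpa [hs0] using h a (mem_cons_self a s)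
    · exact (lt_min (h a (mem_cons_self a s)) (ih hs0 fun i hi => h i (mem_cons_of_mem hi))).trans_le
        (min_le_padicValRat_add hs)

theorem sum_eq_of_forall_lt [DecidableEq ι] {s : Finset ι} {f : ι → ℚ} {i₀ : ι} (hi₀ : i₀ ∈ s)
    (h0 : f i₀ ≠ 0) (h : ∀ i ∈ s, i ≠ i₀ → padicValRat p (f i₀) < padicValRat p (f i)) :
    ∑ i ∈ s, f i ≠ 0 ∧ padicValRat p (∑ i ∈ s, f i) = padicValRat p (f i₀) := by
  rw [← add_sum_erase s f hi₀]
  by_cases hrest : ∑ i ∈ s.erase i₀, f i = 0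
  · simp [hrest, h0]
  have hlt : padicValRat p (f i₀) < padicValRat p (∑ i ∈ s.erase i₀, f i) :=
    lt_sum_of_forall_lt hrest fun i hi => h i (mem_of_mem_erase hi) (ne_of_mem_erase hi)
  have hne := add_ne_zero_of_ne hlt.ne
  exact ⟨hne, add_eq_of_lt hne h0 hrest hlt⟩

end padicValRat

theorem Int.not_dvd_sub_of_dvd_sub {p r j : ℕ} {a : ℤ} (hr : r < p) (hj : j < p) (hjr : j ≠ r)
    (h : (p : ℤ) ∣ a - r) : ¬ (p : ℤ) ∣ a - j := by
  intro h'
  have hrj : (p : ℤ) ∣ j - r := by simpa using dvd_sub h h'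
  have := Int.eq_zero_of_dvd_of_natAbs_lt_natAbs hrj (by omega)
  omega

theorem natCast_add_mul_ne_zero_of_not_dvd {r v : ℕ} (h : ¬ r ∣ v) (m : ℤ) :
    (v : ℤ) + r * m ≠ 0 := fun h0 =>
  h (Int.natCast_dvd_natCast.mp ⟨-m, by linarith⟩)

section Belyi

variable {d k p r i : ℕ}

theorem belyiCoeff_ne_zero (hkd : k < d) : belyiCoeff d k i ≠ 0 := by
  refine mul_ne_zero (div_ne_zero (pow_ne_zero _ (by norm_num)) (by positivity))
    (prod_ne_zero_iff.2 fun j hj => sub_ne_zero.2 ?_)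
  have := mem_range.1 (mem_of_mem_erase hj)
  exact_mod_cast (by omega : d ≠ j)

theorem padicValRat_natCast_sub (hkp : k < p) (hkd : k < d) (hr : r ≤ k) (hpr : p ∣ d - r)
    {j : ℕ} (hj : j ≤ k) :
    padicValRat p ((d : ℚ) - j) = if j = r then (padicValNat p (d - r) : ℤ) else 0 := by
  split_ifs with hjr
  · rw [hjr, ← padicValRat.of_nat, Nat.cast_sub (by omega)]
  · have hpr' : (p : ℤ) ∣ d - r := by
      rw [← Nat.cast_sub (by omega)]; exact Int.natCast_dvd_natCast.2 hpr
    rw [← Int.cast_natCast d, ← Int.cast_natCast j, ← Int.cast_sub, padicValRat.of_int,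
      padicValInt.eq_zero_of_not_dvd (Int.not_dvd_sub_of_dvd_sub (by omega) (by omega) hjr hpr'),
      Nat.cast_zero]

variable [Fact p.Prime]

theorem padicValRat_factorial_of_lt {n : ℕ} (hn : n < p) : padicValRat p (n.factorial : ℚ) = 0 := by
  rw [padicValRat.of_nat, padicValNat.eq_zero_of_not_dvd
    fun h => hn.not_ge ((Nat.Prime.dvd_factorial Fact.out).1 h), Nat.cast_zero]

theorem padicValRat_belyiCoeff (hkp : k < p) (hkd : k < d) (hr : r ≤ k) (hpr : p ∣ d - r)
    (hi : i ≤ k) :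
    padicValRat p (belyiCoeff d k i) = if i = r then 0 else (padicValNat p (d - r) : ℤ) := by
  have hfac : ∀ j ∈ (range (k + 1)).erase i, j ≤ k := fun j hj =>
    Nat.lt_succ_iff.1 (mem_range.1 (mem_of_mem_erase hj))
  have hsign : padicValRat p ((-1 : ℚ) ^ (k - i) / ((k - i).factorial * i.factorial)) = 0 := by
    rw [padicValRat.div (pow_ne_zero _ (by norm_num)) (by positivity), padicValRat.pow,
      padicValRat.neg, padicValRat.one, padicValRat.mul (by positivity) (by positivity),
      padicValRat_factorial_of_lt (by omega), padicValRat_factorial_of_lt (by omega)]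
    simp
  obtain ⟨hsign0, hprod0⟩ := mul_ne_zero_iff.1 (belyiCoeff_ne_zero hkd)
  rw [belyiCoeff, padicValRat.mul hsign0 hprod0, hsign, zero_add,
    padicValRat.prod (prod_ne_zero_iff.1 hprod0),
    sum_congr rfl fun j hj => padicValRat_natCast_sub hkp hkd hr hpr (hfac j hj), sum_ite_eq']
  by_cases hir : i = r
  · simp [hir]
  · simp [hir, Ne.symm hir, show r < k + 1 by omega]

theorem padicValRat_belyiCoeff_mul_pow (hkp : k < p) (hkd : k < d) (hr : r ≤ k)
    (hpr : p ∣ d - r) (hi : i ≤ k) {x : ℚ} (hx : x ≠ 0) :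
    padicValRat p (belyiCoeff d k i * x ^ (d - i)) =
      (if i = r then 0 else (padicValNat p (d - r) : ℤ)) + ((d : ℤ) - i) * padicValRat p x := by
  rw [padicValRat.mul (belyiCoeff_ne_zero hkd) (pow_ne_zero _ hx),
    padicValRat_belyiCoeff hkp hkd hr hpr hi, padicValRat.pow, Nat.cast_sub (by omega)]

theorem padicValRat_belyi (hkp : k < p) (hkd : k < d) (hr : r ≤ k) (hpr : p ∣ d - r)
    (hidf : ¬ r ∣ padicValNat p (d - r)) {x : ℚ} (hx : x ≠ 0) (hvx : padicValRat p x < 0) :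
    belyi d k x ≠ 0 ∧
      padicValRat p (belyi d k x) =
        min ((padicValNat p (d - r) : ℤ) + d * padicValRat p x) (((d : ℤ) - r) * padicValRat p x) := by
  have hval := fun i (hi : i ∈ range (k + 1)) =>
    padicValRat_belyiCoeff_mul_pow hkp hkd hr hpr (Nat.lt_succ_iff.1 (mem_range.1 hi)) hx
  have hterm : ∀ i, belyiCoeff d k i * x ^ (d - i) ≠ 0 := fun i =>
    mul_ne_zero (belyiCoeff_ne_zero hkd) (pow_ne_zero _ hx)
  have hr_mem : r ∈ range (k + 1) := mem_range.2 (by omega)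
  have h0_mem : 0 ∈ range (k + 1) := mem_range.2 (by omega)
  rcases (natCast_add_mul_ne_zero_of_not_dvd hidf (padicValRat p x)).lt_or_gt with hneg | hpos
  · have hr0 : r ≠ 0 := by rintro rfl; simp at hneg; omega
    obtain ⟨hne, heq⟩ := padicValRat.sum_eq_of_forall_lt
      (f := fun i => belyiCoeff d k i * x ^ (d - i)) h0_mem (hterm 0) fun i hi hi0 => by
        rw [hval 0 h0_mem, hval i hi, if_neg (Ne.symm hr0), Nat.cast_zero, sub_zero]
        split_ifs with hir
        · rw [hir, zero_add]; linarith
        · have : (0 : ℤ) < i := by omega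
          nlinarith
    refine ⟨hne, ?_⟩
    rw [belyi, heq, hval 0 h0_mem, if_neg (Ne.symm hr0), Nat.cast_zero, sub_zero,
      min_eq_left (by linarith)]
  · obtain ⟨hne, heq⟩ := padicValRat.sum_eq_of_forall_lt
      (f := fun i => belyiCoeff d k i * x ^ (d - i)) hr_mem (hterm r) fun i hi hir => by
        rw [hval r hr_mem, hval i hi, if_pos rfl, if_neg hir]
        have : (0 : ℤ) ≤ i := by omega
        nlinarith
    refine ⟨hne, ?_⟩
    rw [belyi, heq, hval r hr_mem, if_pos rfl, zero_add, min_eq_right (by linarith)]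

end Belyi

theorem padicValRat_belyiMap_of_val_neg_general (d k p r : ℕ) (hd : 3 ≤ d)
    (hk2 : k ≤ d - 2) (hp : IsIDFPrime d k p) (hr : r ≤ k) (hpr : p ∣ (d - r))
    (hidf : ¬ (r ∣ padicValNat p (d - r)))
    (α β x : ℚ) (hα : α ≠ 0) (hβ : β ≠ 0) (hx : x ≠ 0)
    (hvx : padicValRat p x < 0) :
    (belyiMap d k α β x ≠ 0 →
      min (padicValRat p α + (padicValNat p (d - r) : ℤ) + (d : ℤ) * padicValRat p x)
          (min (padicValRat p α + ((d : ℤ) - (r : ℤ)) * padicValRat p x)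
            (padicValRat p β)) ≤ padicValRat p (belyiMap d k α β x)) ∧
    (padicValRat p α + (padicValNat p (d - r) : ℤ) + (d : ℤ) * padicValRat p x ≠
      padicValRat p α + ((d : ℤ) - (r : ℤ)) * padicValRat p x) ∧
    (∀ A B C : ℤ,
      A = padicValRat p α + (padicValNat p (d - r) : ℤ) + (d : ℤ) * padicValRat p x →
      B = padicValRat p α + ((d : ℤ) - (r : ℤ)) * padicValRat p x →
      C = padicValRat p β →
      ((A < B ∧ A < C) ∨ (B < A ∧ B < C) ∨ (C < A ∧ C < B)) →
      belyiMap d k α β x ≠ 0 ∧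
        padicValRat p (belyiMap d k α β x) = min A (min B C)) := by
  have : Fact p.Prime := ⟨hp.1⟩
  obtain ⟨hB, hvB⟩ := padicValRat_belyi hp.2.1 (by omega) hr hpr hidf hx hvx
  have hαB : α * belyi d k x ≠ 0 := mul_ne_zero hα hB
  have hvαB : padicValRat p (α * belyi d k x) =
      min (padicValRat p α + (padicValNat p (d - r) : ℤ) + d * padicValRat p x)
        (padicValRat p α + ((d : ℤ) - r) * padicValRat p x) := by
    rw [padicValRat.mul hα hB, hvB, ← min_add_add_left]
    simp only [add_assoc]
  unfold belyiMap
  refine ⟨fun hne => ?_, fun h => ?_, fun A B C hA hB hC hmin => ?_⟩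
  · rw [← min_assoc, ← hvαB]
    exact padicValRat.min_le_padicValRat_add hne
  · exact natCast_add_mul_ne_zero_of_not_dvd hidf (padicValRat p x) (by linarith)
  · have hne : padicValRat p (α * belyi d k x) ≠ padicValRat p β := by
      rw [hvαB, ← hA, ← hB, ← hC]; omega
    have hsum := padicValRat.add_ne_zero_of_ne hne
    refine ⟨hsum, ?_⟩
    rw [padicValRat.add_eq_min hsum hαB hβ hne, hvαB, ← hA, ← hB, ← hC, min_assoc]

/-- Valuation of the image of a point with negative valuation under
`f_{α,β}`. -/
theorem padicValRat_belyiMap_of_val_neg (d k p r : ℕ) (hd : 3 ≤ d) (hk1 : 1 ≤ k)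
    (hk2 : k ≤ d - 2) (hp : IsIDFPrime d k p) (hr : r ≤ k) (hpr : p ∣ (d - r))
    (hidf : ¬ (r ∣ padicValNat p (d - r)))
    (α β x : ℚ) (hα : α ≠ 0) (hβ : β ≠ 0) (hx : x ≠ 0)
    (hvx : padicValRat p x < 0) :
    (belyiMap d k α β x ≠ 0 →
      min (padicValRat p α + (padicValNat p (d - r) : ℤ) + (d : ℤ) * padicValRat p x)
          (min (padicValRat p α + ((d : ℤ) - (r : ℤ)) * padicValRat p x)
            (padicValRat p β)) ≤ padicValRat p (belyiMap d k α β x)) ∧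
    (padicValRat p α + (padicValNat p (d - r) : ℤ) + (d : ℤ) * padicValRat p x ≠
      padicValRat p α + ((d : ℤ) - (r : ℤ)) * padicValRat p x) ∧
    (∀ A B C : ℤ,
      A = padicValRat p α + (padicValNat p (d - r) : ℤ) + (d : ℤ) * padicValRat p x →
      B = padicValRat p α + ((d : ℤ) - (r : ℤ)) * padicValRat p x →
      C = padicValRat p β →
      ((A < B ∧ A < C) ∨ (B < A ∧ B < C) ∨ (C < A ∧ C < B)) →
      belyiMap d k α β x ≠ 0 ∧
        padicValRat p (belyiMap d k α β x) = min A (min B C)) :=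
  padicValRat_belyiMap_of_val_neg_general d k p r hd hk2 hp hr hpr hidf α β x hα hβ hx hvx
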